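/- Let (X, μ) be a probability space, let α ≤ β be integers, and for each integer j with α ≤ j ≤ β let T_j : X → X be a measure-preserving map and η_j : X → ℝ a measurable function with 0 ≤ η_j ≤ 1 everywhere. Suppose there are nonnegative reals E_s for α < s ≤ β such that for every such s, | ∫_X (Π_{j=α}^{s−1} η_j(T_j x))·η_s(T_s x) dμ(x) − ( ∫_X Π_{j=α}^{s−1} η_j(T_j x) dμ(x) )·( ∫_X η_s dμ ) | ≤ E_s. Then | ∫_X Π_{j=α}^{β} η_j(T_j x) dμ(x) − Π_{j=α}^{β} ∫_X η_j dμ | ≤ Σ_{s=α+1}^{β} E_s · Π_{j=s+1}^{β} ∫_X η_j dμ, with the convention that the empty product (for s = β) equals 1. -/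

import Mathlib

open MeasureTheory Finset

/-!
Write `a β = ∫ ∏_{j ∈ [α, β]} η_j ∘ T_j` and `c_j = ∫ η_j ≥ 0`. The mixing hypothesis says
`a s ≈ a (s - 1) * c s` up to `E s`, so the error `|a β - ∏_{j ∈ [α, β]} c_j|` grows by induction
on `β` as `err (β + 1) ≤ E (β + 1) + c (β + 1) * err β`, starting from `err α = 0` because `T_α`
preserves `μ`. Unrolling this linear recursion gives the weighted sum.
-/

lemma abs_sub_mul_le_add_mul_abs_sub {a a' p c E : ℝ} (hc : 0 ≤ c) (h : |a' - a * c| ≤ E) :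
    |a' - p * c| ≤ E + c * |a - p| :=
  calc |a' - p * c| = |(a' - a * c) + c * (a - p)| := by ring_nf
    _ ≤ |a' - a * c| + |c * (a - p)| := abs_add_le _ _
    _ ≤ E + c * |a - p| := by rw [abs_mul, abs_of_nonneg hc]; gcongr

lemma sum_Icc_mul_prod_Icc_add_one {R : Type*} [CommSemiring R] {E c : ℤ → R} {a b : ℤ}
    (hab : a ≤ b + 1) :
    ∑ s ∈ Icc a (b + 1), E s * ∏ j ∈ Icc (s + 1) (b + 1), c j =
      E (b + 1) + c (b + 1) * ∑ s ∈ Icc a b, E s * ∏ j ∈ Icc (s + 1) b, c j := by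
  rw [← insert_Icc_right_eq_Icc_add_one hab, sum_insert (by simp),
    Icc_eq_empty (by omega), prod_empty, mul_one, mul_sum]
  refine congrArg (E (b + 1) + ·) (sum_congr rfl fun s hs => ?_)
  rw [← insert_Icc_right_eq_Icc_add_one (by simp only [mem_Icc] at hs; omega),
    prod_insert (by simp), mul_left_comm]

theorem abs_sub_prod_Icc_le_of_abs_sub_mul_le {a c E : ℤ → ℝ} {α β : ℤ} (hαβ : α ≤ β)
    (hc : ∀ j, α < j → j ≤ β → 0 ≤ c j) (hα : a α = c α)
    (hstep : ∀ s, α < s → s ≤ β → |a s - a (s - 1) * c s| ≤ E s) :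
    |a β - ∏ j ∈ Icc α β, c j| ≤ ∑ s ∈ Icc (α + 1) β, E s * ∏ j ∈ Icc (s + 1) β, c j := by
  induction β, hαβ using Int.leInduction with
  | base => simp [hα]
  | succ b hαb ih =>
    have hc' : 0 ≤ c (b + 1) := hc _ (by omega) le_rfl
    have hlast : |a (b + 1) - a b * c (b + 1)| ≤ E (b + 1) := by
      simpa using hstep (b + 1) (by omega) le_rfl
    rw [← prod_Ico_mul_eq_prod_Icc (by omega), Ico_add_one_right_eq_Icc,
      sum_Icc_mul_prod_Icc_add_one (by omega)]
    calc _ ≤ E (b + 1) + c (b + 1) * |a b - ∏ j ∈ Icc α b, c j| :=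
          abs_sub_mul_le_add_mul_abs_sub hc' hlast
      _ ≤ _ := by
          gcongr
          exact ih (fun j h₁ h₂ => hc j h₁ (by omega)) (fun s h₁ h₂ => hstep s h₁ (by omega))

theorem stmt_5_general {X : Type*} [MeasurableSpace X] (μ : Measure X)
    (α β : ℤ) (hαβ : α ≤ β)
    (T : ℤ → X → X) (hT : ∀ j, α ≤ j → j ≤ β → MeasurePreserving (T j) μ μ)
    (η : ℤ → X → ℝ) (hη_meas : ∀ j, Measurable (η j))
    (hη0 : ∀ j x, 0 ≤ η j x)
    (E : ℤ → ℝ)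
    (hmix : ∀ s, α < s → s ≤ β →
      |(∫ x, (∏ j ∈ Finset.Icc α (s - 1), η j (T j x)) * η s (T s x) ∂μ) -
        (∫ x, ∏ j ∈ Finset.Icc α (s - 1), η j (T j x) ∂μ) * ∫ x, η s x ∂μ| ≤ E s) :
    |(∫ x, ∏ j ∈ Finset.Icc α β, η j (T j x) ∂μ) -
      ∏ j ∈ Finset.Icc α β, ∫ x, η j x ∂μ| ≤
      ∑ s ∈ Finset.Icc (α + 1) β, E s * ∏ j ∈ Finset.Icc (s + 1) β, ∫ x, η j x ∂μ := by
  refine abs_sub_prod_Icc_le_of_abs_sub_mul_le (a := fun b => ∫ x, ∏ j ∈ Icc α b, η j (T j x) ∂μ)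
    hαβ (fun j _ _ => integral_nonneg (hη0 j)) ?_ fun s hαs hsβ => ?_
  · have hTα := hT α le_rfl hαβ
    simpa [hTα.map_eq] using
      (integral_map hTα.aemeasurable (hη_meas α).aestronglyMeasurable).symm
  · simpa only [Icc_sub_one_right_eq_Ico, prod_Ico_mul_eq_prod_Icc hαs.le] using hmix s hαs hsβ

/-- Iterated two-mixing estimate for a product of possibly different `[0,1]`-valued observables
composed with measure-preserving maps: the integral of the full product differs from the product
of the individual integrals by at most the sum of the decorrelation errors `E s`, each weighted
by the product of the integrals of the remaining factors. -/
theorem stmt_5 {X : Type*} [MeasurableSpace X] (μ : Measure X) [IsProbabilityMeasure μ]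
    (α β : ℤ) (hαβ : α ≤ β)
    (T : ℤ → X → X) (hT : ∀ j, α ≤ j → j ≤ β → MeasurePreserving (T j) μ μ)
    (η : ℤ → X → ℝ) (hη_meas : ∀ j, Measurable (η j))
    (hη0 : ∀ j x, 0 ≤ η j x) (hη1 : ∀ j x, η j x ≤ 1)
    (E : ℤ → ℝ) (hE : ∀ s, α < s → s ≤ β → 0 ≤ E s)
    (hmix : ∀ s, α < s → s ≤ β →
      |(∫ x, (∏ j ∈ Finset.Icc α (s - 1), η j (T j x)) * η s (T s x) ∂μ) -
        (∫ x, ∏ j ∈ Finset.Icc α (s - 1), η j (T j x) ∂μ) * ∫ x, η s x ∂μ| ≤ E s) :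
    |(∫ x, ∏ j ∈ Finset.Icc α β, η j (T j x) ∂μ) -
      ∏ j ∈ Finset.Icc α β, ∫ x, η j x ∂μ| ≤
      ∑ s ∈ Finset.Icc (α + 1) β, E s * ∏ j ∈ Finset.Icc (s + 1) β, ∫ x, η j x ∂μ :=
  stmt_5_general μ α β hαβ T hT η hη_meas hη0 E hmix
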